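/- Fix a real number y with 0 < y < 1, a real number x₀, and x, z ∈ ℂ with e^x ≠ 1. Then the function τ ↦ e^{−yx}·F(x, z − x₀ − yτ, τ) tends to 2πi·e^{−yx}·(1/(e^x − 1) + 1) as Im τ → ∞. -/

import Mathlib

/-!
Multiplied by `e^{-iπτ/4}`, resp. `e^{-iπ(1/4 - y)τ}` after the shift `w ↦ w - 2πiyτ`, the theta
values entering `F` become series `∑ cₙ e^{iπ(n² + bn)τ}` with `|b| ≤ 1`, so all exponents are
nonnegative. By dominated convergence only the terms with `n² + bn = 0` survive as `Im τ → ∞`: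
`n ∈ {0, -1}` for `b = 1` (the unshifted `θ(x)` and `θ'(0)`), and `n = 0` alone for
`b = 1 - 2y` with `0 < y < 1`. The normalising factors cancel in `F`, and the limits give
`2πi e^{(x+w)/2} / ((e^{x/2} - e^{-x/2}) e^{w/2}) = 2πi e^x / (e^x - 1)`, where
`w = 2πi(z - x₀)`.
-/

open Complex Filter

/-- The Jacobi theta function `θ(z|τ) = ∑_{n∈ℤ} (−1)^n e^{iπτ(n+1/2)²} e^{z(n+1/2)}`. -/
noncomputable def jTheta (z : ℂ) (τ : UpperHalfPlane) : ℂ :=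
  ∑' n : ℤ, (-1 : ℂ) ^ n * Complex.exp (Real.pi * I * (τ : ℂ) * ((n : ℂ) + 1/2) ^ 2)
    * Complex.exp (z * ((n : ℂ) + 1/2))

/-- The Jacobi form `F(x,z,τ) = 2πi θ'(0|τ) θ(x+2πiz|τ)/(θ(x|τ) θ(2πiz|τ))`. -/
noncomputable def jacobiF (x z : ℂ) (τ : UpperHalfPlane) : ℂ :=
  2 * Real.pi * I * deriv (fun w => jTheta w τ) 0 * jTheta (x + 2 * Real.pi * I * z) τ /
    (jTheta x τ * jTheta (2 * Real.pi * I * z) τ)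

open scoped Real UpperHalfPlane

lemma norm_cexp_ofReal_mul_I_mul (a : ℝ) (τ : ℍ) :
    ‖cexp (a * I * τ)‖ = Real.exp (-a * τ.im) := by
  simp [Complex.norm_exp]

theorem tendsto_tsum_mul_cexp_atImInfty {ι : Type*} (c : ι → ℂ) {a : ι → ℝ} (ha : ∀ i, 0 ≤ a i)
    (hsum : Summable fun i => ‖c i‖ * Real.exp (-a i)) :
    Tendsto (fun τ : ℍ => ∑' i, c i * cexp (a i * I * τ)) UpperHalfPlane.atImInfty
      (nhds (∑' i, if a i = 0 then c i else 0)) := by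
  have him : Tendsto UpperHalfPlane.im UpperHalfPlane.atImInfty atTop := tendsto_comap
  refine tendsto_tsum_of_dominated_convergence hsum (fun i => ?_) ?_
  · rcases (ha i).eq_or_lt with hai | hai
    · simp [← hai]
    · rw [if_neg hai.ne', tendsto_zero_iff_norm_tendsto_zero]
      simp only [norm_mul, norm_cexp_ofReal_mul_I_mul]
      simpa using tendsto_const_nhds.mul (Real.tendsto_exp_atBot.comp
        ((tendsto_id.const_mul_atTop_of_neg (neg_lt_zero.mpr hai)).comp him))
  · filter_upwards [him.eventually_ge_atTop 1] with τ hτ i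
    rw [norm_mul, norm_cexp_ofReal_mul_I_mul]
    gcongr
    nlinarith [ha i]

lemma neg_abs_le_mul_of_abs_le_one {b : ℝ} (hb : |b| ≤ 1) (t : ℝ) : -|t| ≤ b * t := by
  have := abs_mul b t ▸ neg_abs_le (b * t)
  nlinarith [abs_nonneg t]

lemma summable_mul_exp_neg_quadratic {b K σ : ℝ} (hb : |b| ≤ 1) {c : ℤ → ℂ}
    (hc : ∀ n : ℤ, ‖c n‖ ≤ K * Real.exp (σ * |(n : ℝ)|)) :
    Summable fun n : ℤ => ‖c n‖ * Real.exp (-(π * ((n : ℝ) ^ 2 + b * n))) := by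
  have hbound := (summable_pow_mul_jacobiTheta₂_term_bound ((σ + π) / (2 * π)) one_pos 0).mul_left K
  refine hbound.of_nonneg_of_le (fun n => by positivity) fun n => ?_
  have hbn := neg_abs_le_mul_of_abs_le_one hb n
  calc ‖c n‖ * Real.exp (-(π * ((n : ℝ) ^ 2 + b * n)))
      ≤ K * Real.exp (σ * |(n : ℝ)|) * Real.exp (-(π * ((n : ℝ) ^ 2 - |(n : ℝ)|))) := by
        gcongr
        · exact (norm_nonneg _).trans (hc n)
        · exact hc n
        · nlinarith [Real.pi_pos]
    _ = K * (|(n : ℤ)| ^ 0 * Real.exp (-π * (1 * n ^ 2 - 2 * ((σ + π) / (2 * π)) * |(n : ℤ)|))) := by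
        rw [Int.cast_abs, pow_zero, one_mul, mul_assoc, ← Real.exp_add]
        congr 2
        field_simp
        ring

theorem tendsto_tsum_mul_cexp_quadratic_atImInfty {b K σ : ℝ} (hb : |b| ≤ 1) {c : ℤ → ℂ}
    (hc : ∀ n : ℤ, ‖c n‖ ≤ K * Real.exp (σ * |(n : ℝ)|)) :
    Tendsto (fun τ : ℍ => ∑' n : ℤ, c n * cexp ((π * ((n : ℝ) ^ 2 + b * n) : ℝ) * I * τ))
      UpperHalfPlane.atImInfty
      (nhds (∑' n : ℤ, if (n : ℝ) * (n + b) = 0 then c n else 0)) := by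
  have hquad (n : ℤ) : 0 ≤ (n : ℝ) ^ 2 + b * n := by
    rcases eq_or_ne n 0 with rfl | hn
    · simp
    have h1 : (1 : ℝ) ≤ |(n : ℝ)| := by exact_mod_cast Int.one_le_abs hn
    nlinarith [sq_abs (n : ℝ), neg_abs_le_mul_of_abs_le_one hb n]
  convert tendsto_tsum_mul_cexp_atImInfty c (fun n => mul_nonneg Real.pi_pos.le (hquad n))
    (summable_mul_exp_neg_quadratic hb hc) using 4 with n
  refine if_congr ?_ rfl rfl
  rw [mul_eq_zero_iff_left Real.pi_ne_zero]
  constructor <;> intro h <;> linear_combination h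

theorem tendsto_tsum_mul_cexp_sq_add_self_atImInfty {K σ : ℝ} {c : ℤ → ℂ}
    (hc : ∀ n : ℤ, ‖c n‖ ≤ K * Real.exp (σ * |(n : ℝ)|)) :
    Tendsto (fun τ : ℍ => ∑' n : ℤ, c n * cexp ((π * ((n : ℝ) ^ 2 + 1 * n) : ℝ) * I * τ))
      UpperHalfPlane.atImInfty (nhds (c 0 + c (-1))) := by
  convert tendsto_tsum_mul_cexp_quadratic_atImInfty (b := 1) (by simp) hc
  rw [tsum_eq_sum (s := {0, -1}), Finset.sum_pair (show (0 : ℤ) ≠ -1 by norm_num)]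
  · simp
  · intro n hn
    simp only [Finset.mem_insert, Finset.mem_singleton, not_or] at hn
    have hn1 : (n : ℝ) + 1 ≠ 0 := by exact_mod_cast fun h => hn.2 (by omega)
    rw [if_neg (mul_ne_zero (by exact_mod_cast hn.1) hn1)]

theorem tendsto_tsum_mul_cexp_quadratic_atImInfty_of_abs_lt {b K σ : ℝ} (hb : |b| < 1)
    {c : ℤ → ℂ} (hc : ∀ n : ℤ, ‖c n‖ ≤ K * Real.exp (σ * |(n : ℝ)|)) :
    Tendsto (fun τ : ℍ => ∑' n : ℤ, c n * cexp ((π * ((n : ℝ) ^ 2 + b * n) : ℝ) * I * τ))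
      UpperHalfPlane.atImInfty (nhds (c 0)) := by
  convert tendsto_tsum_mul_cexp_quadratic_atImInfty hb.le hc
  rw [tsum_eq_single 0]
  · simp
  · intro n hn
    have h1 : (1 : ℝ) ≤ |(n : ℝ)| := by exact_mod_cast Int.one_le_abs hn
    have hnb : (n : ℝ) + b ≠ 0 := fun h => by
      rw [add_eq_zero_iff_eq_neg.mp h, abs_neg] at h1; linarith
    rw [if_neg (mul_ne_zero (by exact_mod_cast hn) hnb)]

lemma neg_one_zpow_eq_cexp (n : ℤ) : (-1 : ℂ) ^ n = cexp (n * (π * I)) := by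
  rw [Complex.exp_int_mul, Complex.exp_pi_mul_I]

lemma cexp_mul_jTheta_sub_eq_tsum (w : ℂ) (y : ℝ) (τ : ℍ) :
    cexp (-(π * I * (1 / 4 - y) * τ)) * jTheta (w - 2 * π * I * y * τ) τ =
      ∑' n : ℤ, (-1 : ℂ) ^ n * cexp (w * (n + 1 / 2)) *
        cexp ((π * ((n : ℝ) ^ 2 + (1 - 2 * y) * n) : ℝ) * I * τ) := by
  rw [jTheta, ← tsum_mul_left]
  refine tsum_congr fun n => ?_
  simp only [mul_assoc, mul_left_comm (cexp _) ((-1 : ℂ) ^ n), ← Complex.exp_add]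
  congr 2
  push_cast
  ring

lemma norm_neg_one_zpow_mul_cexp_le (w : ℂ) (n : ℤ) :
    ‖(-1 : ℂ) ^ n * cexp (w * (n + 1 / 2))‖ ≤
      Real.exp (|w.re| / 2) * Real.exp (|w.re| * |(n : ℝ)|) := by
  rw [norm_mul, norm_zpow, norm_neg, norm_one, one_zpow, one_mul, Complex.norm_exp,
    ← Real.exp_add, Real.exp_le_exp]
  have hre : (w * (n + 1 / 2)).re = w.re * n + w.re / 2 := by simp; ring
  rw [hre]
  nlinarith [abs_mul w.re n ▸ le_abs_self (w.re * n), le_abs_self w.re]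

theorem tendsto_cexp_mul_jTheta_atImInfty (w : ℂ) :
    Tendsto (fun τ : ℍ => cexp (-(π * I * τ / 4)) * jTheta w τ) UpperHalfPlane.atImInfty
      (nhds (cexp (w / 2) - cexp (-w / 2))) := by
  convert tendsto_tsum_mul_cexp_sq_add_self_atImInfty (norm_neg_one_zpow_mul_cexp_le w) using 1
  · funext τ
    convert cexp_mul_jTheta_sub_eq_tsum w 0 τ using 3 <;> push_cast <;> ring_nf
  · norm_num
    ring_nf

theorem tendsto_cexp_mul_jTheta_sub_atImInfty {y : ℝ} (hy0 : 0 < y) (hy1 : y < 1) (w : ℂ) :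
    Tendsto (fun τ : ℍ => cexp (-(π * I * (1 / 4 - y) * τ)) * jTheta (w - 2 * π * I * y * τ) τ)
      UpperHalfPlane.atImInfty (nhds (cexp (w / 2))) := by
  have hb : |1 - 2 * y| < 1 := abs_lt.mpr ⟨by linarith, by linarith⟩
  simp_rw [cexp_mul_jTheta_sub_eq_tsum]
  convert tendsto_tsum_mul_cexp_quadratic_atImInfty_of_abs_lt hb
    (norm_neg_one_zpow_mul_cexp_le w) using 2
  simp [div_eq_mul_inv]

lemma jTheta_eq_cexp_mul_jacobiTheta₂ (w : ℂ) (τ : ℍ) :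
    jTheta w τ = cexp (π * I * τ / 4 + w / 2) * jacobiTheta₂ (w / (2 * π * I) + (1 + τ) / 2) τ := by
  rw [jTheta, jacobiTheta₂, ← tsum_mul_left]
  refine tsum_congr fun n => ?_
  rw [jacobiTheta₂_term, neg_one_zpow_eq_cexp, ← Complex.exp_add, ← Complex.exp_add,
    ← Complex.exp_add]
  congr 1
  field_simp
  ring

lemma cexp_mul_deriv_jTheta_zero (τ : ℍ) :
    cexp (-(π * I * τ / 4)) * deriv (fun w => jTheta w τ) 0 =
      jacobiTheta₂ ((1 + τ) / 2) τ / 2 + jacobiTheta₂' ((1 + τ) / 2) τ / (2 * π * I) := by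
  have hexp : HasDerivAt (fun w : ℂ => cexp (π * I * τ / 4 + w / 2))
      (cexp (π * I * τ / 4 + 0 / 2) * (1 / 2)) 0 :=
    (((hasDerivAt_id 0).div_const 2).const_add _).cexp
  have htheta : HasDerivAt (fun w : ℂ => jacobiTheta₂ (w / (2 * π * I) + (1 + τ) / 2) τ)
      (jacobiTheta₂' (0 / (2 * π * I) + (1 + τ) / 2) τ * (1 / (2 * π * I))) 0 :=
    (hasDerivAt_jacobiTheta₂_fst _ τ.2).comp 0 (((hasDerivAt_id 0).div_const _).add_const _)
  rw [funext (jTheta_eq_cexp_mul_jacobiTheta₂ · τ), (hexp.fun_mul htheta).deriv]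
  have hcancel : cexp (-(π * I * τ / 4)) * cexp (π * I * τ / 4) = 1 := by
    rw [← Complex.exp_add, neg_add_cancel, Complex.exp_zero]
  simp only [zero_div, zero_add, add_zero]
  linear_combination (jacobiTheta₂ ((1 + τ) / 2) τ / 2 +
    jacobiTheta₂' ((1 + τ) / 2) τ / (2 * π * I)) * hcancel

lemma jacobiTheta₂_term_one_add_div_two (n : ℤ) (τ : ℂ) :
    jacobiTheta₂_term n ((1 + τ) / 2) τ =
      (-1 : ℂ) ^ n * cexp ((π * ((n : ℝ) ^ 2 + 1 * n) : ℝ) * I * τ) := by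
  rw [jacobiTheta₂_term, neg_one_zpow_eq_cexp, ← Complex.exp_add]
  congr 1
  push_cast
  ring

theorem tendsto_jacobiTheta₂_one_add_div_two_atImInfty :
    Tendsto (fun τ : ℍ => jacobiTheta₂ ((1 + τ) / 2) τ) UpperHalfPlane.atImInfty (nhds 0) := by
  have hc (n : ℤ) : ‖(-1 : ℂ) ^ n‖ ≤ 1 * Real.exp (0 * |(n : ℝ)|) := by simp
  simp_rw [jacobiTheta₂, jacobiTheta₂_term_one_add_div_two]
  simpa using tendsto_tsum_mul_cexp_sq_add_self_atImInfty hc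

theorem tendsto_jacobiTheta₂'_one_add_div_two_atImInfty :
    Tendsto (fun τ : ℍ => jacobiTheta₂' ((1 + τ) / 2) τ) UpperHalfPlane.atImInfty
      (nhds (2 * π * I)) := by
  have hc (n : ℤ) : ‖2 * π * I * n * (-1 : ℂ) ^ n‖ ≤ 2 * π * Real.exp (1 * |(n : ℝ)|) := by
    simp only [norm_mul, norm_zpow, norm_neg, norm_one, one_zpow, mul_one, norm_I,
      Complex.norm_ofNat, Complex.norm_real, Real.norm_eq_abs, abs_of_pos Real.pi_pos,
      Complex.norm_intCast, one_mul]
    gcongr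
    linarith [Real.add_one_le_exp |(n : ℝ)|]
  simp_rw [jacobiTheta₂', jacobiTheta₂'_term, jacobiTheta₂_term_one_add_div_two, ← mul_assoc]
  simpa using tendsto_tsum_mul_cexp_sq_add_self_atImInfty hc

theorem tendsto_cexp_mul_deriv_jTheta_zero_atImInfty :
    Tendsto (fun τ : ℍ => cexp (-(π * I * τ / 4)) * deriv (fun w => jTheta w τ) 0)
      UpperHalfPlane.atImInfty (nhds 1) := by
  have h2πI : (2 * π * I : ℂ) ≠ 0 := by simp [Real.pi_ne_zero]
  simp_rw [cexp_mul_deriv_jTheta_zero]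
  simpa [h2πI] using (tendsto_jacobiTheta₂_one_add_div_two_atImInfty.div_const 2).add
    (tendsto_jacobiTheta₂'_one_add_div_two_atImInfty.div_const (2 * π * I))

lemma cexp_half_sub_cexp_neg_half (x : ℂ) :
    cexp (x / 2) - cexp (-x / 2) = cexp (-x / 2) * (cexp x - 1) := by
  rw [mul_sub, mul_one, ← Complex.exp_add]
  ring_nf

lemma jacobiF_eq_mul_div_mul {a b : ℂ} (ha : a ≠ 0) (hb : b ≠ 0) (x v : ℂ) (τ : ℍ) :
    jacobiF x v τ = 2 * π * I * (a * deriv (fun w => jTheta w τ) 0) *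
      (b * jTheta (x + 2 * π * I * v) τ) / (a * jTheta x τ * (b * jTheta (2 * π * I * v) τ)) := by
  rw [jacobiF, ← mul_div_mul_left _ _ (mul_ne_zero ha hb)]
  ring

/-- For `0 < y < 1`, `x₀ ∈ ℝ`, and `x, z ∈ ℂ` with `e^x ≠ 1`, the function
`τ ↦ e^{−yx} F(x, z − x₀ − yτ, τ)` tends to `2πi e^{−yx} (1/(e^x − 1) + 1)` as `Im τ → ∞`. -/
theorem jacobiF_shifted_tendsto_atImInfty (y : ℝ) (hy0 : 0 < y) (hy1 : y < 1) (x₀ : ℝ)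
    (x z : ℂ) (hx : Complex.exp x ≠ 1) :
    Tendsto (fun τ : UpperHalfPlane =>
        Complex.exp (-(y : ℂ) * x) * jacobiF x (z - (x₀ : ℂ) - (y : ℂ) * (τ : ℂ)) τ)
      UpperHalfPlane.atImInfty
      (nhds (2 * Real.pi * I * Complex.exp (-(y : ℂ) * x) *
        (1 / (Complex.exp x - 1) + 1))) := by
  set w : ℂ := 2 * π * I * (z - x₀)
  have hsub : cexp x - 1 ≠ 0 := sub_ne_zero.mpr hx
  have hden : (cexp (x / 2) - cexp (-x / 2)) * cexp (w / 2) ≠ 0 := by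
    rw [cexp_half_sub_cexp_neg_half]
    exact mul_ne_zero (mul_ne_zero (Complex.exp_ne_zero _) hsub) (Complex.exp_ne_zero _)
  have hnum := ((tendsto_const_nhds (x := 2 * π * I)).mul
    tendsto_cexp_mul_deriv_jTheta_zero_atImInfty).mul
      (tendsto_cexp_mul_jTheta_sub_atImInfty hy0 hy1 (x + w))
  have hdenom := (tendsto_cexp_mul_jTheta_atImInfty x).mul
    (tendsto_cexp_mul_jTheta_sub_atImInfty hy0 hy1 w)
  have hlim := hnum.div hdenom hden
  convert (tendsto_const_nhds (x := cexp (-y * x))).mul hlim using 2 with τ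
  · rw [Pi.div_apply, jacobiF_eq_mul_div_mul (Complex.exp_ne_zero _) (Complex.exp_ne_zero _),
      show 2 * π * I * (z - x₀ - y * τ) = w - 2 * π * I * y * τ by ring, ← add_sub_assoc]
  · rw [cexp_half_sub_cexp_neg_half, show (x + w) / 2 = x / 2 + w / 2 by ring, Complex.exp_add]
    field_simp
    rw [add_sub_cancel, ← Complex.exp_add]
    ring_nf
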